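/- For any fixed natural number n ≥ 1, the integral over the box [0, log X]^{2n} of exp(min(x_1+...+x_n, y_1+...+y_n)) dx_1...dx_n dy_1...dy_n is asymptotic to C(2n, n) · X^n as X → ∞. -/

import Mathlib

open MeasureTheory Real Filter Set
open scoped ENNReal Nat

/-!
Reflecting each coordinate, `x ↦ log X - x`, maps the cube `[0, log X]ⁿ` to itself and turns
`exp (min (∑ x, ∑ y))` into `Xⁿ · exp (-max (∑ x, ∑ y))`; so after dividing by `Xⁿ` the integrals
increase, by monotone convergence, to the integral of `exp (-max (∑ x, ∑ y))` over the orthant.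
Writing `exp (-M) = ∫_{s > M} exp (-s) ds` and applying Tonelli, that integral equals
`∫₀^∞ exp (-s) · (sⁿ / n!)² ds = (2n)! / (n!)²`, where `sⁿ / n!` is the volume of the simplex
`{x ≥ 0, ∑ x < s}`.
-/

def cornerSimplex (n : ℕ) (s : ℝ) : Set (Fin n → ℝ) := {x | 0 ≤ x ∧ ∑ i, x i < s}

theorem pos_of_mem_cornerSimplex {n : ℕ} {s : ℝ} {x : Fin n → ℝ} (hx : x ∈ cornerSimplex n s) :
    0 < s :=
  (Finset.sum_nonneg fun i _ => hx.1 i).trans_lt hx.2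

theorem setLIntegral_Ico_ofReal_sub_pow_div_factorial (n : ℕ) {s : ℝ} (hs : 0 ≤ s) :
    ∫⁻ t in Ico 0 s, ENNReal.ofReal ((s - t) ^ n / n !)
      = ENNReal.ofReal (s ^ (n + 1) / (n + 1) !) := by
  have hint : IntegrableOn (fun t => (s - t) ^ n / n !) (Ico 0 s) :=
    (Continuous.integrableOn_Icc (by fun_prop)).mono_set Ico_subset_Icc_self
  rw [← ofReal_integral_eq_lintegral_ofReal hint
      ((ae_restrict_iff' measurableSet_Ico).2 (.of_forall fun t ht =>
        div_nonneg (pow_nonneg (sub_nonneg.2 ht.2.le) n) (Nat.cast_nonneg _))),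
    integral_Ico_eq_integral_Ioo, ← integral_Ioc_eq_integral_Ioo,
    ← intervalIntegral.integral_of_le hs, intervalIntegral.integral_div,
    intervalIntegral.integral_comp_sub_left (fun x => x ^ n), integral_pow, Nat.factorial_succ]
  congr 1
  push_cast
  field_simp
  ring

theorem volume_cornerSimplex (n : ℕ) {s : ℝ} (hs : 0 < s) :
    volume (cornerSimplex n s) = ENNReal.ofReal (s ^ n / n !) := by
  induction n generalizing s with
  | zero =>
    have : cornerSimplex 0 s = univ :=
      eq_univ_of_forall fun x => ⟨fun i => i.elim0, by simpa using hs⟩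
    simp [this, volume_pi]
  | succ n ih =>
    set B : Set (ℝ × (Fin n → ℝ)) := {q | 0 ≤ q.1 ∧ q.2 ∈ cornerSimplex n (s - q.1)}
    have hB : MeasurableSet B :=
      (measurableSet_le measurable_const measurable_fst).inter
        ((measurableSet_le measurable_const measurable_snd).inter
          (measurableSet_lt (f := fun q : ℝ × (Fin n → ℝ) => ∑ i, q.2 i)
            (g := fun q => s - q.1) (by fun_prop) (by fun_prop)))
    have hpre : MeasurableEquiv.piFinSuccAbove (fun _ => ℝ) 0 ⁻¹' B = cornerSimplex (n + 1) s := by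
      ext x
      simp [B, cornerSimplex, Fin.sum_univ_succ, Fin.forall_fin_succ, Fin.tail, Pi.le_def,
        lt_sub_iff_add_lt', and_assoc]
    have hslice (t : ℝ) : volume (Prod.mk t ⁻¹' B)
        = (Ico 0 s).indicator (fun t => ENNReal.ofReal ((s - t) ^ n / n !)) t := by
      by_cases ht : t ∈ Ico 0 s
      · have : Prod.mk t ⁻¹' B = cornerSimplex n (s - t) := by
          ext y; simp [B, ht.1]
        rw [indicator_of_mem ht, this, ih (sub_pos.2 ht.2)]
      · have : Prod.mk t ⁻¹' B = ∅ := by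
          refine eq_empty_of_forall_notMem fun y ⟨ht0, hy⟩ => ht ⟨ht0, ?_⟩
          exact sub_pos.1 (pos_of_mem_cornerSimplex hy)
        rw [indicator_of_notMem ht, this, measure_empty]
    rw [← hpre, volume_pi,
      (measurePreserving_piFinSuccAbove (fun _ => volume) 0).measure_preimage hB.nullMeasurableSet,
      ← volume_pi, Measure.prod_apply hB, lintegral_congr hslice,
      lintegral_indicator measurableSet_Ico, setLIntegral_Ico_ofReal_sub_pow_div_factorial n hs.le]

theorem lintegral_exp_neg_eq_lintegral_meas_lt {α : Type*} [MeasurableSpace α] (μ : Measure α)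
    [SFinite μ] {M : α → ℝ} (hM : Measurable M) :
    ∫⁻ p, ENNReal.ofReal (exp (-M p)) ∂μ = ∫⁻ s, ENNReal.ofReal (exp (-s)) * μ {p | M p < s} := by
  set g : α × ℝ → ℝ≥0∞ := {q | M q.1 < q.2}.indicator fun q => ENNReal.ofReal (exp (-q.2))
  have hg : Measurable g :=
    (by fun_prop : Measurable fun q : α × ℝ => ENNReal.ofReal (exp (-q.2))).indicator
      (measurableSet_lt (hM.comp measurable_fst) measurable_snd)
  have htail (p : α) : ENNReal.ofReal (exp (-M p)) = ∫⁻ s, g (p, s) := by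
    change _ = ∫⁻ s, (Ioi (M p)).indicator (fun s => ENNReal.ofReal (exp (-s))) s
    rw [lintegral_indicator measurableSet_Ioi, ← ofReal_integral_eq_lintegral_ofReal
      (integrableOn_exp_neg_Ioi _) (.of_forall fun s => (exp_pos _).le), integral_exp_neg_Ioi]
  have hlevel (s : ℝ) : ∫⁻ p, g (p, s) ∂μ = ENNReal.ofReal (exp (-s)) * μ {p | M p < s} := by
    change ∫⁻ p, {p | M p < s}.indicator (fun _ => ENNReal.ofReal (exp (-s))) p ∂μ = _
    exact lintegral_indicator_const (measurableSet_lt hM measurable_const) _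
  simp_rw [htail, ← hlevel]
  exact lintegral_lintegral_swap hg.aemeasurable

theorem lintegral_Ioi_ofReal_exp_neg_mul_pow (m : ℕ) :
    ∫⁻ s in Ioi 0, ENNReal.ofReal (exp (-s) * s ^ m) = m ! := by
  have hrpow : EqOn (fun s : ℝ => exp (-s) * s ^ ((m + 1 : ℝ) - 1)) (fun s => exp (-s) * s ^ m)
      (Ioi 0) := fun s _ => by simp [← rpow_natCast]
  rw [← ofReal_integral_eq_lintegral_ofReal
      ((integrableOn_congr_fun hrpow measurableSet_Ioi).1
        (GammaIntegral_convergent (by positivity)))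
      ((ae_restrict_iff' measurableSet_Ioi).2 (.of_forall fun s hs =>
        mul_nonneg (exp_pos _).le (pow_nonneg (le_of_lt hs) m))),
    ← setIntegral_congr_fun measurableSet_Ioi hrpow, ← Gamma_eq_integral (by positivity),
    Gamma_nat_eq_factorial, ENNReal.ofReal_natCast]

theorem setLIntegral_Ici_prod_exp_neg_max_sum (n m : ℕ) :
    ∫⁻ p in Ici (0 : Fin n → ℝ) ×ˢ Ici (0 : Fin m → ℝ),
      ENNReal.ofReal (exp (-max (∑ i, p.1 i) (∑ j, p.2 j))) = (n + m).choose n := by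
  have hlevel (s : ℝ) :
      volume.restrict (Ici 0 ×ˢ Ici 0)
          {p : (Fin n → ℝ) × (Fin m → ℝ) | max (∑ i, p.1 i) (∑ j, p.2 j) < s}
        = (Ioi 0).indicator
            (fun s => ENNReal.ofReal (s ^ n / n !) * ENNReal.ofReal (s ^ m / m !)) s := by
    rw [Measure.restrict_apply (measurableSet_lt (by fun_prop) measurable_const)]
    have hsub :
        {p : (Fin n → ℝ) × (Fin m → ℝ) | max (∑ i, p.1 i) (∑ j, p.2 j) < s} ∩ (Ici 0 ×ˢ Ici 0)
          = cornerSimplex n s ×ˢ cornerSimplex m s := by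
      ext p
      simp only [cornerSimplex, mem_inter_iff, mem_ofPred_eq, mem_prod, mem_Ici, max_lt_iff]
      tauto
    rw [hsub, Measure.volume_eq_prod, Measure.prod_prod]
    by_cases hs : 0 < s
    · rw [indicator_of_mem (mem_Ioi.2 hs), volume_cornerSimplex n hs, volume_cornerSimplex m hs]
    · have hempty : cornerSimplex m s = ∅ :=
        eq_empty_of_forall_notMem fun x hx => hs (pos_of_mem_cornerSimplex hx)
      rw [indicator_of_notMem (show s ∉ Ioi 0 from hs), hempty, measure_empty, mul_zero]
  have hpoint : EqOn
      (fun s => ENNReal.ofReal (exp (-s)) *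
        (ENNReal.ofReal (s ^ n / n !) * ENNReal.ofReal (s ^ m / m !)))
      (fun s => ENNReal.ofReal (exp (-s) * s ^ (n + m)) * ENNReal.ofReal ((n ! * m ! : ℝ)⁻¹))
      (Ioi 0) := by
    intro s (hs : 0 < s)
    dsimp only
    rw [← ENNReal.ofReal_mul (by positivity), ← ENNReal.ofReal_mul (by positivity),
      ← ENNReal.ofReal_mul (by positivity)]
    congr 1
    field_simp
    ring
  rw [lintegral_exp_neg_eq_lintegral_meas_lt _ (by fun_prop)]
  simp_rw [hlevel, ← indicator_mul_right (Ioi 0) fun s => ENNReal.ofReal (exp (-s))]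
  rw [lintegral_indicator measurableSet_Ioi, setLIntegral_congr_fun measurableSet_Ioi hpoint,
    lintegral_mul_const _ (by fun_prop), lintegral_Ioi_ofReal_exp_neg_mul_pow,
    ← ENNReal.ofReal_natCast, ← ENNReal.ofReal_mul (by positivity), ← ENNReal.ofReal_natCast]
  congr 1
  rw [← Nat.choose_mul_factorial_mul_factorial (Nat.le_add_right n m), Nat.add_sub_cancel_left]
  push_cast
  field_simp

theorem integrableOn_Ici_prod_exp_neg_max_sum (n m : ℕ) :
    IntegrableOn (fun p : (Fin n → ℝ) × (Fin m → ℝ) => exp (-max (∑ i, p.1 i) (∑ j, p.2 j)))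
      (Ici 0 ×ˢ Ici 0) := by
  refine ⟨by fun_prop, ?_⟩
  rw [hasFiniteIntegral_iff_ofReal (.of_forall fun p => (exp_pos _).le),
    setLIntegral_Ici_prod_exp_neg_max_sum]
  exact ENNReal.natCast_lt_top _

theorem setIntegral_Ici_prod_exp_neg_max_sum (n m : ℕ) :
    ∫ p in Ici (0 : Fin n → ℝ) ×ˢ Ici (0 : Fin m → ℝ),
      exp (-max (∑ i, p.1 i) (∑ j, p.2 j)) = (n + m).choose n := by
  rw [integral_eq_lintegral_of_nonneg_ae (.of_forall fun p => (exp_pos _).le)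
    (integrableOn_Ici_prod_exp_neg_max_sum n m).aestronglyMeasurable,
    setLIntegral_Ici_prod_exp_neg_max_sum, ENNReal.toReal_natCast]

def cube (n : ℕ) (T : ℝ) : Set (Fin n → ℝ) := univ.pi fun _ => Icc 0 T

theorem iUnion_cube_prod_cube (n m : ℕ) :
    ⋃ T : ℝ, cube n T ×ˢ cube m T = Ici 0 ×ˢ Ici 0 := by
  ext p
  simp only [cube, mem_iUnion, mem_prod, Set.mem_pi, mem_univ, true_implies, mem_Icc, mem_Ici,
    Pi.le_def, Pi.zero_apply]
  refine ⟨fun ⟨T, h₁, h₂⟩ => ⟨fun i => (h₁ i).1, fun j => (h₂ j).1⟩, fun ⟨h₁, h₂⟩ =>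
    ⟨‖p‖, fun i => ⟨h₁ i, ?_⟩, fun j => ⟨h₂ j, ?_⟩⟩⟩
  · exact (le_norm_self _).trans ((norm_le_pi_norm p.1 i).trans (norm_fst_le p))
  · exact (le_norm_self _).trans ((norm_le_pi_norm p.2 j).trans (norm_snd_le p))

theorem tendsto_setIntegral_cube_exp_neg_max_sum (n m : ℕ) :
    Tendsto (fun T => ∫ p in cube n T ×ˢ cube m T, exp (-max (∑ i, p.1 i) (∑ j, p.2 j)))
      atTop (nhds ((n + m).choose n)) := by
  have hmono : Monotone fun T => cube n T ×ˢ cube m T := fun _ _ hST =>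
    prod_mono (pi_mono fun _ _ => Icc_subset_Icc_right hST)
      (pi_mono fun _ _ => Icc_subset_Icc_right hST)
  have h := tendsto_setIntegral_of_monotone (s := fun T => cube n T ×ˢ cube m T)
    (fun T => (MeasurableSet.univ_pi fun _ => measurableSet_Icc).prod
      (MeasurableSet.univ_pi fun _ => measurableSet_Icc)) hmono
    ((iUnion_cube_prod_cube n m).symm ▸ integrableOn_Ici_prod_exp_neg_max_sum n m)
  rwa [iUnion_cube_prod_cube, setIntegral_Ici_prod_exp_neg_max_sum] at h

theorem setIntegral_cube_exp_min_sum (n : ℕ) (T : ℝ) :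
    ∫ p in cube n T ×ˢ cube n T, exp (min (∑ i, p.1 i) (∑ i, p.2 i))
      = exp (n * T) * ∫ p in cube n T ×ˢ cube n T, exp (-max (∑ i, p.1 i) (∑ i, p.2 i)) := by
  set c : Fin n → ℝ := fun _ => T
  set Φ := (MeasurableEquiv.subLeft c).prodCongr (MeasurableEquiv.subLeft c)
  have hΦ : MeasurePreserving Φ volume volume :=
    (Measure.measurePreserving_sub_left volume c).prod (Measure.measurePreserving_sub_left volume c)
  have hcube (x : Fin n → ℝ) : c - x ∈ cube n T ↔ x ∈ cube n T := by
    simp only [cube, Set.mem_pi, mem_univ, true_implies, mem_Icc, Pi.sub_apply, c, sub_nonneg,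
      sub_le_self_iff, and_comm]
  have hsum (x : Fin n → ℝ) : ∑ i, (c - x) i = n * T - ∑ i, x i := by
    simp [c, Finset.sum_sub_distrib]
  have hpre : Φ ⁻¹' (cube n T ×ˢ cube n T) = cube n T ×ˢ cube n T := by
    ext p; exact and_congr (hcube p.1) (hcube p.2)
  rw [← hΦ.setIntegral_preimage_emb Φ.measurableEmbedding, hpre, ← integral_const_mul]
  congr 1 with p
  change exp (min (∑ i, (c - p.1) i) (∑ i, (c - p.2) i)) = _
  rw [hsum, hsum, min_sub_sub_left, sub_eq_add_neg, exp_add]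

theorem tendsto_setIntegral_cube_exp_min_sum_div_exp (n : ℕ) :
    Tendsto (fun T => (∫ p in cube n T ×ˢ cube n T, exp (min (∑ i, p.1 i) (∑ i, p.2 i)))
      / exp (n * T)) atTop (nhds ((2 * n).choose n)) := by
  simp_rw [setIntegral_cube_exp_min_sum, mul_div_cancel_left₀ _ (exp_ne_zero _), two_mul]
  exact tendsto_setIntegral_cube_exp_neg_max_sum n n

theorem stmt0_general (n : ℕ) :
    Tendsto (fun X : ℝ =>
      (∫ p in (Set.univ.pi fun _ : Fin n => Set.Icc (0:ℝ) (Real.log X)) ×ˢ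
          (Set.univ.pi fun _ : Fin n => Set.Icc (0:ℝ) (Real.log X)),
        Real.exp (min (∑ i, p.1 i) (∑ i, p.2 i))) / X ^ n)
      atTop (nhds (((2 * n).choose n : ℝ))) := by
  refine ((tendsto_setIntegral_cube_exp_min_sum_div_exp n).comp tendsto_log_atTop).congr' ?_
  filter_upwards [eventually_gt_atTop 0] with X hX
  rw [Function.comp_apply, exp_nat_mul, exp_log hX]
  rfl

/-- For fixed `n ≥ 1`, the integral over `[0, log X]^{2n}` of
`exp(min(x₁+⋯+xₙ, y₁+⋯+yₙ))` is asymptotic to `C(2n,n) · Xⁿ` as `X → ∞`. -/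
theorem stmt0 (n : ℕ) (hn : 1 ≤ n) :
    Tendsto (fun X : ℝ =>
      (∫ p in (Set.univ.pi fun _ : Fin n => Set.Icc (0:ℝ) (Real.log X)) ×ˢ
          (Set.univ.pi fun _ : Fin n => Set.Icc (0:ℝ) (Real.log X)),
        Real.exp (min (∑ i, p.1 i) (∑ i, p.2 i))) / X ^ n)
      atTop (nhds (((2 * n).choose n : ℝ))) :=
  stmt0_general n
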